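/- arXiv:1705.09224 — 2 statements merged into one kernel-verified Lean document; each statement's English description precedes it below -/
import Mathlib

section
/- Let A be a noetherian commutative ring and M a meager A-module. Then the associated prime ideals of M are pairwise disjoint: for any two distinct associated primes P and Q of M, one has P + Q = A. -/
/-!
If `P = ann x` and `Q = ann y` are distinct primes, then `A x ∩ A y = 0`: a common nonzero
element `a x = b y` would have annihilator both `P` and `Q`. Hence `A x + A y ≅ A/P × A/Q`, and
for a maximal ideal `𝔪 ⊇ P + Q` its quotient by `𝔪 x + 𝔪 y` is `(A/𝔪)²`, which meagerness
forbids.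
-/

/-- `X` is (isomorphic to) a subquotient of the `A`-module `M`. -/
def IsSubquotientOf (A : Type u) [CommRing A]
    (X : Type x) [AddCommGroup X] [Module A X]
    (M : Type v) [AddCommGroup M] [Module A M] : Prop :=
  ∃ (N : Submodule A M) (P : Submodule A (M ⧸ N)), Nonempty (X ≃ₗ[A] P)

/-- An `A`-module `M` is meager if for every maximal ideal `𝔪` of `A`, `(A/𝔪)²` is not
isomorphic to a subquotient of `M`. -/
def IsMeagerModule (A : Type u) [CommRing A]
    (M : Type v) [AddCommGroup M] [Module A M] : Prop :=
  ∀ 𝔪 : Ideal A, 𝔪.IsMaximal → ¬ IsSubquotientOf A ((A ⧸ 𝔪) × (A ⧸ 𝔪)) M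

open LinearMap Submodule

section CommSemiring

variable {A M : Type*} [CommSemiring A] [AddCommMonoid M] [Module A M]

theorem ker_toSpanSingleton_smul_eq {P : Ideal A} [P.IsPrime] {x : M}
    (hx : ker (toSpanSingleton A M x) = P) {a : A} (ha : a • x ≠ 0) :
    ker (toSpanSingleton A M (a • x)) = P := by
  have haP : a ∉ P := by rwa [← hx, mem_ker, toSpanSingleton_apply]
  ext c
  calc c ∈ ker (toSpanSingleton A M (a • x)) ↔ c * a ∈ P := by
        rw [← hx]; simp only [mem_ker, toSpanSingleton_apply, smul_smul]
    _ ↔ c ∈ P := by rw [‹P.IsPrime›.mul_mem_iff_mem_or_mem, or_iff_left haP]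

theorem disjoint_span_singleton_of_ker_toSpanSingleton_ne {P Q : Ideal A} [P.IsPrime]
    [Q.IsPrime] {x y : M} (hx : ker (toSpanSingleton A M x) = P)
    (hy : ker (toSpanSingleton A M y) = Q) (hne : P ≠ Q) :
    Disjoint (span A {x}) (span A {y}) := by
  rw [disjoint_def]
  rintro z hzx hzy
  obtain ⟨a, rfl⟩ := mem_span_singleton.mp hzx
  obtain ⟨b, hab⟩ := mem_span_singleton.mp hzy
  by_contra hz
  apply hne
  rw [← ker_toSpanSingleton_smul_eq hx hz, ← ker_toSpanSingleton_smul_eq hy (hab ▸ hz), hab]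

theorem IsAssociatedPrime.exists_ker_toSpanSingleton_eq [IsNoetherianRing A] {P : Ideal A}
    (hP : IsAssociatedPrime P M) : ∃ x : M, ker (toSpanSingleton A M x) = P := by
  obtain ⟨-, x, rfl⟩ := isAssociatedPrime_iff.mp hP
  exact ⟨x, by ext; simp [mem_colon_singleton]⟩

end CommSemiring

section CommRing

variable {A M : Type*} [CommRing A] [AddCommGroup M] [Module A M]

theorem isSubquotientOf_of_surjective {X Y : Type*} [AddCommGroup X] [Module A X]
    [AddCommGroup Y] [Module A Y] (g : X →ₗ[A] M) (N : Submodule A M) (f : X →ₗ[A] Y)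
    (hf : Function.Surjective f) (hker : ker f = N.comap g) : IsSubquotientOf A Y M :=
  ⟨N, range (N.mkQ ∘ₗ g), ⟨(f.quotKerEquivOfSurjective hf).symm ≪≫ₗ
    quotEquivOfEq _ _ (by rw [ker_comp, ker_mkQ, hker]) ≪≫ₗ (N.mkQ ∘ₗ g).quotKerEquivRange⟩⟩

theorem isSubquotientOf_prod_quotient {x y : M} (hxy : Disjoint (span A {x}) (span A {y}))
    {I J : Ideal A} (hI : ker (toSpanSingleton A M x) ≤ I)
    (hJ : ker (toSpanSingleton A M y) ≤ J) :
    IsSubquotientOf A ((A ⧸ I) × (A ⧸ J)) M := by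
  set φ := (toSpanSingleton A M x).coprod (toSpanSingleton A M y)
  have hφ : ker φ ≤ Submodule.prod I J := by
    rw [ker_coprod_of_disjoint_range _ _
      (by rwa [LinearMap.range_toSpanSingleton, LinearMap.range_toSpanSingleton])]
    exact prod_mono hI hJ
  refine isSubquotientOf_of_surjective φ ((Submodule.prod I J).map φ) (I.mkQ.prodMap J.mkQ)
    (I.mkQ_surjective.prodMap J.mkQ_surjective) ?_
  rw [comap_map_eq_self hφ, ker_prodMap, ker_mkQ, ker_mkQ]

end CommRing

/-- The associated primes of a meager module over a noetherian commutative ring are pairwise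
disjoint: distinct associated primes `P`, `Q` satisfy `P + Q = A`. -/
theorem associated_primes_pairwise_disjoint_of_meager
    (A : Type u) [CommRing A] [IsNoetherianRing A]
    (M : Type v) [AddCommGroup M] [Module A M]
    (hM : IsMeagerModule A M) :
    ∀ P ∈ associatedPrimes A M, ∀ Q ∈ associatedPrimes A M, P ≠ Q → P ⊔ Q = ⊤ := by
  intro P hP Q hQ hne
  by_contra htop
  obtain ⟨𝔪, h𝔪, hle⟩ := Ideal.exists_le_maximal _ htop
  have := hP.isPrime
  have := hQ.isPrime
  obtain ⟨x, hx⟩ := hP.exists_ker_toSpanSingleton_eq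
  obtain ⟨y, hy⟩ := hQ.exists_ker_toSpanSingleton_eq
  exact hM 𝔪 h𝔪 (isSubquotientOf_prod_quotient
    (disjoint_span_singleton_of_ker_toSpanSingleton_ne hx hy hne)
    (hx.trans_le (le_sup_left.trans hle)) (hy.trans_le (le_sup_right.trans hle)))
end

section
/- Let A be a noetherian integral domain. The following are equivalent: (1) A is a meager A-module; (2) the fraction field Frac(A) is a meager A-module; (3) A is a Dedekind domain. -/
open Function Submodule
open scoped nonZeroDivisors

section Subquotient

variable {A X M M' : Type*} [CommRing A] [AddCommGroup X] [Module A X]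
  [AddCommGroup M] [Module A M] [AddCommGroup M'] [Module A M']

theorem IsSubquotientOf.of_surjective (f : M →ₗ[A] X) (hf : Surjective f) :
    IsSubquotientOf A X M :=
  ⟨LinearMap.ker f, ⊤, ⟨(f.quotKerEquivOfSurjective hf).symm.trans Submodule.topEquiv.symm⟩⟩

theorem IsSubquotientOf.of_injective (h : IsSubquotientOf A X M) (f : M →ₗ[A] M')
    (hf : Injective f) : IsSubquotientOf A X M' := by
  obtain ⟨N, P, ⟨e⟩⟩ := h
  have hN : N = (N.map f).comap f := (comap_map_eq_of_injective hf N).symm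
  let g : (M ⧸ N) →ₗ[A] M' ⧸ N.map f := N.mapQ _ f hN.le
  have hg : Injective g := by
    rw [← LinearMap.ker_eq_bot]
    exact ker_liftQ_eq_bot _ _ _ (by rw [LinearMap.ker_comp, ker_mkQ]; exact hN.ge)
  exact ⟨N.map f, P.map g, ⟨e.trans (P.equivMapOfInjective g hg)⟩⟩

theorem IsSubquotientOf.exists_surjective (h : IsSubquotientOf A X M) :
    ∃ (N : Submodule A M) (f : N →ₗ[A] X), Surjective f := by
  obtain ⟨N, P, ⟨e⟩⟩ := h
  let Q : Submodule A M := P.comap N.mkQ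
  let g : Q →ₗ[A] P := (N.mkQ ∘ₗ Q.subtype).codRestrict P fun q => q.2
  have hg : Surjective g := by
    rintro ⟨p, hp⟩
    obtain ⟨m, rfl⟩ := N.mkQ_surjective p
    exact ⟨⟨m, hp⟩, rfl⟩
  exact ⟨Q, e.symm ∘ₗ g, e.symm.surjective.comp hg⟩

theorem IsSubquotientOf.exists_fg_surjective [Module.Finite A X] (h : IsSubquotientOf A X M) :
    ∃ N : Submodule A M, N.FG ∧ ∃ f : N →ₗ[A] X, Surjective f := by
  obtain ⟨N, f, hf⟩ := h.exists_surjective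
  obtain ⟨n, s, hs⟩ := Module.Finite.exists_fin (R := A) (M := X)
  let t : Fin n → N := surjInv hf ∘ s
  have ht : span A (Set.range fun i => (t i : M)) ≤ N :=
    span_le.mpr <| Set.range_subset_iff.mpr fun i => (t i).2
  refine ⟨_, fg_span (Set.finite_range _), f ∘ₗ inclusion ht, ?_⟩
  rw [← LinearMap.range_eq_top, eq_top_iff, ← hs, span_le]
  rintro _ ⟨i, rfl⟩
  exact ⟨⟨t i, subset_span ⟨i, rfl⟩⟩, surjInv_eq hf (s i)⟩

theorem IsMeagerModule.of_injective (h : IsMeagerModule A M') (f : M →ₗ[A] M')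
    (hf : Injective f) : IsMeagerModule A M :=
  fun 𝔪 h𝔪 hsub => h 𝔪 h𝔪 (hsub.of_injective f hf)

end Subquotient

/-- For finitely generated `M` this says that the localization `M_𝔪` is cyclic. -/
def Module.IsLocallyCyclicAt {A : Type*} [CommRing A] (𝔪 : Ideal A) (M : Type*)
    [AddCommGroup M] [Module A M] : Prop :=
  ∃ a : M, ∃ u ∉ 𝔪, ∀ x : M, ∃ c : A, u • x = c • a

section ResidueField

variable {A : Type*} [CommRing A] {𝔪 : Ideal A} [𝔪.IsMaximal]

theorem Submodule.mem_of_smul_mem_of_notMem_maximal {X : Type*} [AddCommGroup X] [Module A X]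
    [Module (A ⧸ 𝔪) X] [IsScalarTower A (A ⧸ 𝔪) X] (p : Submodule A X) {u : A} (hu : u ∉ 𝔪)
    {y : X} (h : u • y ∈ p) : y ∈ p := by
  obtain ⟨d, hd⟩ := Ideal.Quotient.exists_inv (I := 𝔪) (a := Ideal.Quotient.mk 𝔪 u)
    (by rwa [ne_eq, Ideal.Quotient.eq_zero_iff_mem])
  obtain ⟨d, rfl⟩ := Ideal.Quotient.mk_surjective d
  have : y = d • u • y := by
    rw [smul_smul, ← algebraMap_smul (A ⧸ 𝔪) (d * u), Ideal.Quotient.algebraMap_eq, map_mul,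
      mul_comm, hd, one_smul]
  exact this ▸ p.smul_mem d h

theorem span_singleton_ne_top_residueField_prod (v : (A ⧸ 𝔪) × (A ⧸ 𝔪)) : A ∙ v ≠ ⊤ := by
  let := Ideal.Quotient.field 𝔪
  intro htop
  have hk : (⊤ : Submodule (A ⧸ 𝔪) ((A ⧸ 𝔪) × (A ⧸ 𝔪))).IsPrincipal := by
    refine ⟨v, (eq_top_iff.mpr fun w _ => ?_).symm⟩
    obtain ⟨c, rfl⟩ := mem_span_singleton.mp (htop ▸ mem_top : w ∈ A ∙ v)
    rw [← algebraMap_smul (A ⧸ 𝔪)]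
    exact smul_mem _ _ (mem_span_singleton_self v)
  have := Module.finrank_le_one_iff_top_isPrincipal.mpr hk
  simp at this

theorem Module.IsLocallyCyclicAt.not_surjective {M : Type*} [AddCommGroup M] [Module A M]
    (hM : IsLocallyCyclicAt 𝔪 M) (f : M →ₗ[A] (A ⧸ 𝔪) × (A ⧸ 𝔪)) : ¬ Surjective f := by
  obtain ⟨a, u, hu, hcyc⟩ := hM
  refine fun hf => span_singleton_ne_top_residueField_prod (f a) (eq_top_iff.mpr fun y _ => ?_)
  obtain ⟨x, rfl⟩ := hf y
  obtain ⟨c, hc⟩ := hcyc x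
  refine mem_of_smul_mem_of_notMem_maximal _ hu (mem_span_singleton.mpr ⟨c, ?_⟩)
  rw [← map_smul, ← map_smul, hc]

end ResidueField

theorem Module.exists_surjective_prod_of_one_lt_finrank {k V : Type*} [Field k] [AddCommGroup V]
    [Module k V] [Module.Finite k V] (h : 1 < Module.finrank k V) :
    ∃ f : V →ₗ[k] k × k, Surjective f := by
  let e := (Module.finBasis k V).equivFun
  let π := LinearMap.funLeft k k (Fin.castLE h : Fin 2 → Fin (Module.finrank k V))
  refine ⟨(LinearEquiv.piFinTwo k fun _ => k).toLinearMap ∘ₗ π ∘ₗ e.toLinearMap, ?_⟩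
  exact (LinearEquiv.piFinTwo k _).surjective.comp
    ((LinearMap.funLeft_surjective_of_injective k k _ (Fin.castLE_injective h)).comp e.surjective)

theorem Module.exists_surjective_or_isLocallyCyclicAt {A M : Type*} [CommRing A]
    [AddCommGroup M] [Module A M] [Module.Finite A M] (𝔪 : Ideal A) [h𝔪 : 𝔪.IsMaximal] :
    (∃ f : M →ₗ[A] (A ⧸ 𝔪) × (A ⧸ 𝔪), Surjective f) ∨ IsLocallyCyclicAt 𝔪 M := by
  let := Ideal.Quotient.field 𝔪
  let V := M ⧸ (𝔪 • ⊤ : Submodule A M)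
  have : Module.Finite (A ⧸ 𝔪) V := Module.Finite.of_restrictScalars_finite A _ _
  rcases le_or_gt (Module.finrank (A ⧸ 𝔪) V) 1 with h | h
  · right
    obtain ⟨⟨v, hv⟩⟩ := Module.finrank_le_one_iff_top_isPrincipal.mp h
    obtain ⟨a, rfl⟩ := Submodule.Quotient.mk_surjective _ v
    have hsup : ⊤ ≤ (A ∙ a) ⊔ 𝔪 • ⊤ := fun x _ => by
      obtain ⟨c, hc⟩ :=
        mem_span_singleton.mp (hv ▸ mem_top : Submodule.Quotient.mk (p := 𝔪 • ⊤) x ∈ _)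
      obtain ⟨c, rfl⟩ := Ideal.Quotient.mk_surjective c
      rw [Module.Quotient.mk_smul_mk, Submodule.Quotient.eq] at hc
      exact mem_sup.mpr ⟨c • a, mem_span_singleton.mpr ⟨c, rfl⟩, x - c • a,
        by simpa using neg_mem hc, add_sub_cancel _ _⟩
    obtain ⟨u, hu1, hu⟩ :=
      exists_sub_one_mem_and_smul_le_of_fg_of_le_sup Module.Finite.fg_top le_rfl hsup
    refine ⟨a, u, fun hu𝔪 => ?_, fun x => ?_⟩
    · exact (Ideal.ne_top_iff_one 𝔪).mp h𝔪.ne_top (by simpa using sub_mem hu𝔪 hu1)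
    · obtain ⟨c, hc⟩ := mem_span_singleton.mp (hu (smul_mem_pointwise_smul x u ⊤ mem_top))
      exact ⟨c, hc.symm⟩
  · left
    obtain ⟨f, hf⟩ := Module.exists_surjective_prod_of_one_lt_finrank h
    exact ⟨f.restrictScalars A ∘ₗ mkQ _, hf.comp (mkQ_surjective _)⟩

theorem IsMeagerModule.isLocallyCyclicAt {A M : Type*} [CommRing A] [AddCommGroup M]
    [Module A M] [Module.Finite A M] (hM : IsMeagerModule A M) {𝔪 : Ideal A}
    (h𝔪 : 𝔪.IsMaximal) : Module.IsLocallyCyclicAt 𝔪 M :=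
  (Module.exists_surjective_or_isLocallyCyclicAt 𝔪).resolve_left
    fun ⟨f, hf⟩ => hM 𝔪 h𝔪 (.of_surjective f hf)

namespace FractionalIdeal

variable {A K : Type*} [CommRing A] [IsDomain A] [Field K] [Algebra A K] [IsFractionRing A K]

theorem isLocallyCyclicAt_of_mul_inv_eq_one {J : FractionalIdeal A⁰ K} (hJ : J * J⁻¹ = 1)
    {𝔪 : Ideal A} (h𝔪 : 𝔪 ≠ ⊤) : Module.IsLocallyCyclicAt 𝔪 (J : Submodule A K) := by
  have hunit : ∀ t ∈ J, ∀ t' ∈ J⁻¹, ∃ c : A, algebraMap A K c = t * t' := fun t ht t' ht' =>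
    (mem_one_iff A⁰).mp (hJ ▸ mul_mem_mul ht ht')
  -- `1 ∈ J * J⁻¹`, so not all products `t * t'` lie in `𝔪`
  obtain ⟨t, ht, t', ht', hu⟩ :
      ∃ t ∈ J, ∃ t' ∈ J⁻¹, t * t' ∉ Submodule.map (Algebra.linearMap A K) 𝔪 := by
    by_contra! hle
    have h1 : (1 : K) ∈ Submodule.map (Algebra.linearMap A K) 𝔪 := by
      refine Submodule.mul_le.mpr hle ?_
      rw [← coe_mul, hJ]
      exact one_mem_one A⁰
    obtain ⟨m, hm, hm1⟩ := h1
    rw [Algebra.linearMap_apply, ← map_one (algebraMap A K),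
      (IsFractionRing.injective A K).eq_iff] at hm1
    exact h𝔪 ((Ideal.eq_top_iff_one 𝔪).mpr (hm1 ▸ hm))
  obtain ⟨u, hu'⟩ := hunit t ht t' ht'
  refine ⟨⟨t, ht⟩, u, fun hu𝔪 => hu ⟨u, hu𝔪, hu'⟩, fun ⟨x, hx⟩ => ?_⟩
  obtain ⟨c, hc⟩ := hunit x hx t' ht'
  refine ⟨c, Subtype.ext ?_⟩
  simp only [SetLike.val_smul, Algebra.smul_def, hu', hc]
  ring

theorem mul_inv_eq_one_of_isLocallyCyclicAt {J : FractionalIdeal A⁰ K} (hJ : J ≠ 0)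
    (hloc : ∀ 𝔪 : Ideal A, 𝔪.IsMaximal → Module.IsLocallyCyclicAt 𝔪 (J : Submodule A K)) :
    J * J⁻¹ = 1 := by
  by_contra hne
  obtain ⟨I, hI⟩ := le_one_iff_exists_coeIdeal.mp (inv_eq (I := J) ▸ mul_one_div_le_one)
  have hItop : I ≠ ⊤ := by rintro rfl; exact hne (by rw [← hI, coeIdeal_top])
  obtain ⟨𝔪, h𝔪, hI𝔪⟩ := I.exists_le_maximal hItop
  obtain ⟨⟨a, ha⟩, u, hu, hcyc⟩ := hloc 𝔪 h𝔪
  have hu0 : algebraMap A K u ≠ 0 := by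
    rw [map_ne_zero_iff _ (IsFractionRing.injective A K)]
    rintro rfl; exact hu 𝔪.zero_mem
  have ha0 : a ≠ 0 := by
    rintro rfl
    refine hJ (eq_zero_iff.mpr fun x hx => ?_)
    obtain ⟨c, hc⟩ := hcyc ⟨x, hx⟩
    simpa [Algebra.smul_def, hu0] using congrArg Subtype.val hc
  -- `u / a ∈ J⁻¹`, while `a * (u / a) = u ∉ 𝔪`
  have hz : algebraMap A K u / a ∈ J⁻¹ := by
    rw [mem_inv_iff hJ]
    intro x hx
    obtain ⟨c, hc⟩ := hcyc ⟨x, hx⟩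
    refine (mem_one_iff A⁰).mpr ⟨c, ?_⟩
    have hc : algebraMap A K u * x = algebraMap A K c * a := by
      simpa [Algebra.smul_def] using congrArg Subtype.val hc
    field_simp
    rw [hc]
  have hmem := mul_mem_mul ha hz
  rw [mul_div_cancel₀ _ ha0, ← hI, mem_coeIdeal] at hmem
  obtain ⟨v, hv, hvu⟩ := hmem
  exact hu (hI𝔪 (IsFractionRing.injective A K hvu ▸ hv))

end FractionalIdeal

theorem IsDedekindDomain.isLocallyCyclicAt_of_fg {A K : Type*} [CommRing A] [IsDedekindDomain A]
    [Field K] [Algebra A K] [IsFractionRing A K] {N : Submodule A K} (hN : N.FG) {𝔪 : Ideal A}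
    (h𝔪 : 𝔪 ≠ ⊤) : Module.IsLocallyCyclicAt 𝔪 N := by
  by_cases hN0 : N = ⊥
  · subst hN0
    exact ⟨0, 1, (Ideal.ne_top_iff_one 𝔪).mp h𝔪, fun _ => ⟨0, Subsingleton.elim _ _⟩⟩
  let J : FractionalIdeal A⁰ K := ⟨N, FractionalIdeal.isFractional_of_fg hN⟩
  have hJ : J ≠ 0 := fun h => hN0 (by simpa [J] using congrArg Subtype.val h)
  exact FractionalIdeal.isLocallyCyclicAt_of_mul_inv_eq_one (J := J) (mul_inv_cancel₀ hJ) h𝔪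

/-- For a noetherian integral domain `A`, the following are equivalent: `A` is a meager
`A`-module; `Frac(A)` is a meager `A`-module; `A` is a Dedekind domain. -/
theorem meager_iff_dedekind
    (A : Type u) [CommRing A] [IsDomain A] [IsNoetherianRing A] :
    List.TFAE
      [ IsMeagerModule A A,
        IsMeagerModule A (FractionRing A),
        IsDedekindDomain A ] := by
  tfae_have 1 → 3 := fun hA => by
    rw [isDedekindDomain_iff_mul_inv_cancel (K := FractionRing A)]
    intro J hJ
    have := FractionalIdeal.isNoetherian J
    have hJA : IsMeagerModule A J :=
      hA.of_injective (J.num.subtype ∘ₗ J.equivNumOfIsLocalization.toLinearMap)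
        (Subtype.val_injective.comp J.equivNumOfIsLocalization.injective)
    exact J.mul_inv_eq_one_of_isLocallyCyclicAt hJ fun 𝔪 h𝔪 => hJA.isLocallyCyclicAt h𝔪
  tfae_have 3 → 2 := fun _ 𝔪 h𝔪 hsub => by
    obtain ⟨N, hN, f, hf⟩ := hsub.exists_fg_surjective
    exact (IsDedekindDomain.isLocallyCyclicAt_of_fg hN h𝔪.ne_top).not_surjective f hf
  tfae_have 2 → 1 := fun hK =>
    hK.of_injective (Algebra.linearMap A (FractionRing A)) (IsFractionRing.injective A _)
  tfae_finish
end
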